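/- Let μ be a σ-finite measure on ℝⁿ and P a finite nonzero measure on ℝⁿ with density f with respect to μ, Z = P(ℝⁿ). Let X* have distribution P(·)/Z, and let G* be a Gumbel random variable with location log Z, independent of X*. Assume log f(X*) is integrable. Then E[−log f(X*) + G*] = H(f) + γ, where H(f) = −∫ (f(x)/Z) log(f(x)/Z) μ(dx) is the entropy of the probability density proportional to f, and γ is the Euler–Mascheroni constant. -/

import Mathlib

/-!
With `Z = P univ`, the identity `(a / Z) log (a / Z) = Z⁻¹ a log a - (log Z) a / Z` turns the
entropy into `H(f) = log Z - E[log f(X*)]`.  A Gumbel variable with location `m` has the law of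
`m - log E` with `E ~ Exp(1)`, so its mean is `m - ∫₀^∞ log t e^{-t} dt = m - Γ'(1) = m + γ`.
Linearity of expectation combines the two.
-/

open MeasureTheory ProbabilityTheory Real Set Filter
open scoped ENNReal Topology

lemma abs_log_le_two_mul_rpow_neg_half_add_self {t : ℝ} (ht : 0 < t) :
    |log t| ≤ 2 * t ^ (-(1 / 2) : ℝ) + t := by
  have hupper : log t ≤ t := by simpa using log_le_rpow_div ht.le one_pos
  have hlower : -log t ≤ 2 * t ^ (-(1 / 2) : ℝ) := by
    have h := log_le_rpow_div (inv_pos.mpr ht).le (one_half_pos (α := ℝ))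
    rwa [log_inv, inv_rpow ht.le, ← rpow_neg ht.le, div_eq_mul_inv, inv_div, div_one,
      mul_comm] at h
  have := rpow_pos_of_pos ht (-(1 / 2) : ℝ)
  exact abs_le.mpr ⟨by linarith, by linarith⟩

lemma integrableOn_log_mul_exp_neg : IntegrableOn (fun t => log t * exp (-t)) (Ioi 0) := by
  have hgamma (s : ℝ) (hs : 0 < s) := GammaIntegral_convergent hs
  have hbound : IntegrableOn
      (fun t => 2 * (exp (-t) * t ^ ((1 / 2 : ℝ) - 1)) + exp (-t) * t ^ ((2 : ℝ) - 1)) (Ioi 0) :=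
    ((hgamma _ one_half_pos).const_mul 2).add (hgamma _ two_pos)
  refine hbound.mono' (by fun_prop) ((ae_restrict_iff' measurableSet_Ioi).mpr
    (Eventually.of_forall fun t (ht : 0 < t) => ?_))
  rw [norm_mul, norm_of_nonneg (exp_pos _).le, norm_eq_abs]
  calc |log t| * exp (-t) ≤ (2 * t ^ (-(1 / 2) : ℝ) + t) * exp (-t) := by
        gcongr; exact abs_log_le_two_mul_rpow_neg_half_add_self ht
    _ = _ := by norm_num; ring

/-- `Γ'(1) = -γ`, with `Γ'(1)` computed by differentiating the Euler integral. -/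
lemma integral_log_mul_exp_neg :
    ∫ t in Ioi 0, log t * exp (-t) = -eulerMascheroniConstant := by
  have hintegral := Complex.hasDerivAt_GammaIntegral (s := 1) one_pos
  have hGamma : Complex.Gamma =ᶠ[𝓝 1] Complex.GammaIntegral := by
    filter_upwards [(isOpen_lt continuous_const Complex.continuous_re).mem_nhds
      (show (0 : ℝ) < (1 : ℂ).re by norm_num)] with s hs
    exact Complex.Gamma_eq_integral hs
  have hderiv := (hintegral.congr_of_eventuallyEq hGamma).real_of_complex
  have hGamma_re : (fun x : ℝ => (Complex.Gamma x).re) = Gamma := by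
    ext x; rw [Complex.Gamma_ofReal, Complex.ofReal_re]
  have hvalue : (∫ t : ℝ in Ioi 0, (t : ℂ) ^ ((1 : ℂ) - 1) * (log t * exp (-t))).re
      = ∫ t in Ioi 0, log t * exp (-t) := by
    simp only [sub_self, Complex.cpow_zero, one_mul]
    exact_mod_cast congrArg Complex.re (integral_ofReal (𝕜 := ℂ))
  rw [hGamma_re, hvalue] at hderiv
  exact hderiv.unique hasDerivAt_Gamma_one

section Exponential

variable {r : ℝ}

instance : NullSingletonClass (expMeasure r) :=
  inferInstanceAs (NullSingletonClass (volume.withDensity _))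

lemma expMeasure_Iic_zero (hr : 0 < r) : expMeasure r (Iic 0) = 0 := by
  have := isProbabilityMeasure_expMeasure hr
  rw [← ofReal_cdf, cdf_expMeasure_eq hr]
  simp

lemma ae_pos_expMeasure (hr : 0 < r) : ∀ᵐ t ∂expMeasure r, 0 < t :=
  ae_iff.mpr (measure_mono_null (fun _ => not_lt.mp) (expMeasure_Iic_zero hr))

lemma expMeasure_Ici (hr : 0 < r) {c : ℝ} (hc : 0 ≤ c) :
    expMeasure r (Ici c) = ENNReal.ofReal (exp (-(r * c))) := by
  have := isProbabilityMeasure_expMeasure hr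
  have hexp_le_one : exp (-(r * c)) ≤ 1 := exp_le_one_iff.mpr (by nlinarith)
  rw [← compl_Iio, prob_compl_eq_one_sub measurableSet_Iio, measure_congr Iio_ae_eq_Iic,
    ← ofReal_cdf, cdf_expMeasure_eq hr, if_pos hc, ← ENNReal.ofReal_one,
    ← ENNReal.ofReal_sub _ (sub_nonneg.mpr hexp_le_one), sub_sub_cancel]

lemma toReal_exponentialPDF_smul (hr : 0 < r) (g : ℝ → ℝ) (t : ℝ) :
    (exponentialPDF r t).toReal • g t =
      (Ici 0).indicator (fun t => r * exp (-(r * t)) * g t) t := by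
  by_cases ht : 0 ≤ t
  · rw [indicator_of_mem (show t ∈ Ici 0 from ht), exponentialPDF_of_nonneg ht,
      ENNReal.toReal_ofReal (by positivity), smul_eq_mul]
  · rw [indicator_of_notMem (show t ∉ Ici 0 from ht), exponentialPDF_of_neg (not_le.mp ht),
      ENNReal.toReal_zero, zero_smul]

lemma integrable_expMeasure_iff (hr : 0 < r) {g : ℝ → ℝ} :
    Integrable g (expMeasure r) ↔ IntegrableOn (fun t => r * exp (-(r * t)) * g t) (Ioi 0) := by
  change Integrable g (volume.withDensity (exponentialPDF r)) ↔ _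
  rw [integrable_withDensity_iff_integrable_smul' (f := exponentialPDF r)
    (measurable_exponentialPDFReal r).ennreal_ofReal
    (Eventually.of_forall fun _ => ENNReal.ofReal_lt_top)]
  simp_rw [toReal_exponentialPDF_smul hr]
  rw [integrable_indicator_iff measurableSet_Ici, integrableOn_Ici_iff_integrableOn_Ioi]

lemma integral_expMeasure (hr : 0 < r) (g : ℝ → ℝ) :
    ∫ t, g t ∂expMeasure r = ∫ t in Ioi 0, r * exp (-(r * t)) * g t := by
  change ∫ t, g t ∂volume.withDensity (exponentialPDF r) = _
  rw [integral_withDensity_eq_integral_toReal_smul (f := exponentialPDF r)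
    (measurable_exponentialPDFReal r).ennreal_ofReal
    (Eventually.of_forall fun _ => ENNReal.ofReal_lt_top)]
  simp_rw [toReal_exponentialPDF_smul hr]
  rw [integral_indicator measurableSet_Ici, integral_Ici_eq_integral_Ioi]

end Exponential

section Gumbel

instance : IsProbabilityMeasure (expMeasure 1) := isProbabilityMeasure_expMeasure one_pos

lemma integrable_log_expMeasure_one : Integrable log (expMeasure 1) := by
  rw [integrable_expMeasure_iff one_pos]
  exact integrableOn_log_mul_exp_neg.congr_fun
    (fun t _ => by rw [one_mul, one_mul, mul_comm]) measurableSet_Ioi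

lemma integral_log_expMeasure_one : ∫ t, log t ∂expMeasure 1 = -eulerMascheroniConstant := by
  rw [integral_expMeasure one_pos, ← integral_log_mul_exp_neg]
  exact setIntegral_congr_fun measurableSet_Ioi fun t _ => by rw [one_mul, one_mul, mul_comm]

noncomputable def gumbelMeasure (m : ℝ) : Measure ℝ := (expMeasure 1).map (fun t => m - log t)

variable {m : ℝ}

instance : IsProbabilityMeasure (gumbelMeasure m) :=
  Measure.isProbabilityMeasure_map (by fun_prop)

lemma gumbelMeasure_Iic (g : ℝ) :
    gumbelMeasure m (Iic g) = ENNReal.ofReal (exp (-exp (-(g - m)))) := by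
  have hpreimage : (fun t => m - log t) ⁻¹' Iic g =ᵐ[expMeasure 1] Ici (exp (m - g)) := by
    filter_upwards [ae_pos_expMeasure one_pos] with t ht
    change (m - log t ≤ g) = (exp (m - g) ≤ t)
    rw [eq_iff_iff, ← log_le_log_iff (exp_pos _) ht, log_exp]
    constructor <;> intro h <;> linarith
  rw [gumbelMeasure, Measure.map_apply (by fun_prop) measurableSet_Iic, measure_congr hpreimage,
    expMeasure_Ici one_pos (exp_pos _).le, one_mul, neg_sub]

lemma integrable_gumbelMeasure : Integrable (fun x => x) (gumbelMeasure m) :=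
  (integrable_map_measure (by fun_prop) (by fun_prop)).mpr
    ((integrable_const m).sub integrable_log_expMeasure_one)

lemma integral_gumbelMeasure : ∫ x, x ∂gumbelMeasure m = m + eulerMascheroniConstant := by
  rw [gumbelMeasure, integral_map (by fun_prop) (by fun_prop),
    integral_sub (integrable_const m) integrable_log_expMeasure_one, integral_log_expMeasure_one,
    integral_const, probReal_univ, one_smul, sub_neg_eq_add]

variable {Ω : Type*} [MeasurableSpace Ω] {μ : Measure Ω} {G : Ω → ℝ}

lemma map_eq_gumbelMeasure [IsFiniteMeasure μ] (hG : Measurable G)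
    (hcdf : ∀ g, μ {ω | G ω ≤ g} = ENNReal.ofReal (exp (-exp (-(g - m))))) :
    μ.map G = gumbelMeasure m :=
  Measure.ext_of_Iic _ _ fun g => by
    rw [Measure.map_apply hG measurableSet_Iic, gumbelMeasure_Iic]
    exact hcdf g

lemma integrable_of_map_eq_gumbelMeasure (hG : Measurable G) (hlaw : μ.map G = gumbelMeasure m) :
    Integrable G μ :=
  (integrable_map_measure (g := fun x => x) (by fun_prop) hG.aemeasurable).mp
    (hlaw ▸ integrable_gumbelMeasure)

lemma integral_of_map_eq_gumbelMeasure (hG : Measurable G) (hlaw : μ.map G = gumbelMeasure m) :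
    ∫ ω, G ω ∂μ = m + eulerMascheroniConstant := by
  rw [← integral_gumbelMeasure, ← hlaw, integral_map hG.aemeasurable (by fun_prop)]

end Gumbel

lemma div_mul_log_div (a c : ℝ) :
    a / c * log (a / c) = c⁻¹ * (a * log a) - c⁻¹ * log c * a := by
  rcases eq_or_ne a 0 with rfl | ha
  · simp
  rcases eq_or_ne c 0 with rfl | hc
  · simp
  rw [log_div ha hc]
  ring

section Density

variable {α : Type*} [MeasurableSpace α] {μ : Measure α} {f : α → ℝ}

lemma integral_div_mul_log_div (hf : Integrable f μ)
    (hflogf : Integrable (fun x => f x * log (f x)) μ) (c : ℝ) :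
    ∫ x, f x / c * log (f x / c) ∂μ =
      c⁻¹ * ∫ x, f x * log (f x) ∂μ - c⁻¹ * log c * ∫ x, f x ∂μ := by
  simp_rw [div_mul_log_div]
  rw [integral_sub (hflogf.const_mul _) (hf.const_mul _), integral_const_mul, integral_const_mul]

lemma integrable_withDensity_ofReal_iff (hf : Measurable f) (hf0 : 0 ≤ f) {g : α → ℝ} :
    Integrable g (μ.withDensity fun x => ENNReal.ofReal (f x)) ↔
      Integrable (fun x => f x * g x) μ := by
  rw [integrable_withDensity_iff_integrable_smul' hf.ennreal_ofReal
    (Eventually.of_forall fun _ => ENNReal.ofReal_lt_top)]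
  simp_rw [ENNReal.toReal_ofReal (hf0 _), smul_eq_mul]

lemma integral_withDensity_ofReal (hf : Measurable f) (hf0 : 0 ≤ f) (g : α → ℝ) :
    ∫ x, g x ∂μ.withDensity (fun x => ENNReal.ofReal (f x)) = ∫ x, f x * g x ∂μ := by
  rw [integral_withDensity_eq_integral_toReal_smul hf.ennreal_ofReal
    (Eventually.of_forall fun _ => ENNReal.ofReal_lt_top)]
  simp_rw [ENNReal.toReal_ofReal (hf0 _), smul_eq_mul]

lemma integrable_of_isFiniteMeasure_withDensity_ofReal (hf : Measurable f) (hf0 : 0 ≤ f)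
    [IsFiniteMeasure (μ.withDensity fun x => ENNReal.ofReal (f x))] : Integrable f μ := by
  simpa using (integrable_withDensity_ofReal_iff hf hf0).mp (integrable_const (1 : ℝ))

lemma integral_eq_measureReal_withDensity_ofReal_univ (hf : Measurable f) (hf0 : 0 ≤ f) :
    ∫ x, f x ∂μ = (μ.withDensity fun x => ENNReal.ofReal (f x)).real univ := by
  simpa using (integral_withDensity_ofReal hf hf0 (μ := μ) fun _ => (1 : ℝ)).symm

end Density

section ScaledLaw

variable {Ω β : Type*} [MeasurableSpace Ω] [MeasurableSpace β] {ν : Measure Ω} {P : Measure β}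
  {X : Ω → β} {c : ℝ≥0∞} {g : β → ℝ}

lemma map_eq_inv_smul (hX : Measurable X)
    (hlaw : ∀ B, MeasurableSet B → ν {ω | X ω ∈ B} = P B / c) : ν.map X = c⁻¹ • P :=
  Measure.ext fun B hB => by
    rw [Measure.map_apply hX hB, Measure.smul_apply, smul_eq_mul, mul_comm, ← div_eq_mul_inv]
    exact hlaw B hB

lemma integrable_comp_iff_of_map_eq_smul (hX : Measurable X) (hg : Measurable g) (hc0 : c ≠ 0)
    (hctop : c ≠ ∞) (hlaw : ν.map X = c • P) :
    Integrable (fun ω => g (X ω)) ν ↔ Integrable g P := by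
  rw [← integrable_smul_measure (μ := P) hc0 hctop, ← hlaw,
    integrable_map_measure hg.aestronglyMeasurable hX.aemeasurable, Function.comp_def]

lemma integral_comp_of_map_eq_smul (hX : Measurable X) (hg : Measurable g)
    (hlaw : ν.map X = c • P) : ∫ ω, g (X ω) ∂ν = c.toReal * ∫ x, g x ∂P := by
  rw [← integral_map hX.aemeasurable hg.aestronglyMeasurable, hlaw, integral_smul_measure,
    smul_eq_mul]

end ScaledLaw

theorem gumbel_entropy_representation_general
    {Ω : Type*} [MeasureSpace Ω] [IsProbabilityMeasure (ℙ : Measure Ω)]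
    {n : ℕ} (μ P : Measure (Fin n → ℝ)) [IsFiniteMeasure P] (hP : P ≠ 0)
    (f : (Fin n → ℝ) → ℝ) (hfmeas : Measurable f) (hf0 : ∀ x, 0 ≤ f x)
    (hPd : ∀ B, MeasurableSet B → P B = ∫⁻ x in B, ENNReal.ofReal (f x) ∂μ)
    (X : Ω → (Fin n → ℝ)) (G : Ω → ℝ) (hXmeas : Measurable X) (hGmeas : Measurable G)
    (hX : ∀ B, MeasurableSet B → ℙ {ω | X ω ∈ B} = P B / P Set.univ)
    (hG : ∀ g : ℝ, ℙ {ω | G ω ≤ g} =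
      ENNReal.ofReal (Real.exp (-Real.exp (-(g - Real.log (P Set.univ).toReal)))))
    (hint : Integrable (fun ω => Real.log (f (X ω))) ℙ) :
    ∫ ω, (-Real.log (f (X ω)) + G ω) ∂ℙ =
      (-∫ x, (f x / (P Set.univ).toReal) *
          Real.log (f x / (P Set.univ).toReal) ∂μ)
        + Real.eulerMascheroniConstant := by
  have hPf : P = μ.withDensity fun x => ENNReal.ofReal (f x) :=
    Measure.ext fun B hB => by rw [hPd B hB, withDensity_apply _ hB]
  have hZ0 : P univ ≠ 0 := Measure.measure_univ_ne_zero.mpr hP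
  have hZtop : P univ ≠ ∞ := measure_ne_top P univ
  have hf : Integrable f μ := by
    have : IsFiniteMeasure (μ.withDensity fun x => ENNReal.ofReal (f x)) := hPf ▸ inferInstance
    exact integrable_of_isFiniteMeasure_withDensity_ofReal hfmeas hf0
  have hfZ : ∫ x, f x ∂μ = (P univ).toReal := by
    rw [integral_eq_measureReal_withDensity_ofReal_univ hfmeas hf0, ← hPf, measureReal_def]
  have hlawX := map_eq_inv_smul hXmeas hX
  have hlogf : Measurable fun x => log (f x) := by fun_prop
  have hflogf : Integrable (fun x => f x * log (f x)) μ :=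
    (integrable_withDensity_ofReal_iff hfmeas hf0).mp <| hPf ▸
      (integrable_comp_iff_of_map_eq_smul hXmeas hlogf (ENNReal.inv_ne_zero.mpr hZtop)
        (ENNReal.inv_ne_top.mpr hZ0) hlawX).mp hint
  have hlogX : ∫ ω, log (f (X ω)) = (P univ).toReal⁻¹ * ∫ x, f x * log (f x) ∂μ := by
    rw [integral_comp_of_map_eq_smul hXmeas hlogf hlawX, ENNReal.toReal_inv, hPf,
      integral_withDensity_ofReal hfmeas hf0]
  have hlawG := map_eq_gumbelMeasure hGmeas hG
  rw [integral_add (f := fun ω => -log (f (X ω))) hint.neg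
      (integrable_of_map_eq_gumbelMeasure hGmeas hlawG), integral_neg, hlogX,
    integral_of_map_eq_gumbelMeasure hGmeas hlawG, integral_div_mul_log_div hf hflogf, hfZ]
  have hZpos : 0 < (P univ).toReal := ENNReal.toReal_pos hZ0 hZtop
  field_simp
  ring

/-- **Entropy representation via a Gumbel process.**
Let `P` be a finite nonzero measure on `ℝⁿ` with density `f` w.r.t. a σ-finite measure `μ`,
`Z = P(ℝⁿ)`.  If `X* ~ P/Z`, `G*` is Gumbel with location `log Z` independent of `X*`, and
`log f (X*)` is integrable, then `E[-log f (X*) + G*] = H(f) + γ`, where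
`H(f) = -∫ (f x / Z) log (f x / Z) dμ` and `γ` is the Euler–Mascheroni constant. -/
theorem gumbel_entropy_representation
    {Ω : Type*} [MeasureSpace Ω] [IsProbabilityMeasure (ℙ : Measure Ω)]
    {n : ℕ} (μ P : Measure (Fin n → ℝ)) [SigmaFinite μ] [IsFiniteMeasure P] (hP : P ≠ 0)
    (f : (Fin n → ℝ) → ℝ) (hfmeas : Measurable f) (hf0 : ∀ x, 0 ≤ f x)
    (hPd : ∀ B, MeasurableSet B → P B = ∫⁻ x in B, ENNReal.ofReal (f x) ∂μ)
    (X : Ω → (Fin n → ℝ)) (G : Ω → ℝ) (hXmeas : Measurable X) (hGmeas : Measurable G)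
    (hX : ∀ B, MeasurableSet B → ℙ {ω | X ω ∈ B} = P B / P Set.univ)
    (hG : ∀ g : ℝ, ℙ {ω | G ω ≤ g} =
      ENNReal.ofReal (Real.exp (-Real.exp (-(g - Real.log (P Set.univ).toReal)))))
    (hindep : IndepFun X G ℙ)
    (hint : Integrable (fun ω => Real.log (f (X ω))) ℙ) :
    ∫ ω, (-Real.log (f (X ω)) + G ω) ∂ℙ =
      (-∫ x, (f x / (P Set.univ).toReal) *
          Real.log (f x / (P Set.univ).toReal) ∂μ)
        + Real.eulerMascheroniConstant :=
  gumbel_entropy_representation_general μ P hP f hfmeas hf0 hPd X G hXmeas hGmeas hX hG hint
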